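/- Let D = −δ + d act on W-valued forms on ℝ^{2n}, with the Moyal–Weyl product taken with respect to the standard Poisson matrix. (i) For every a ∈ C^∞(ℝ^{2n},ℂ)[[ℏ]] there is a unique W-valued 0-form ã with Dã = 0 and ã(x,0) = a(x), namely the fiberwise Taylor series ã(x,y) = Σ_α (1/α!)(∂^α_x a)(x) y^α. (ii) If ã, b̃ are the flat sections with ã(x,0) = a and b̃(x,0) = b, then the fiberwise product ã⋆b̃ is again flat and (ã⋆b̃)(x,0) = a⋆b, the Moyal star-product of a and b. Hence σ(u) = u|_{y=0} is a ℂ[[ℏ]]-algebra isomorphism from the algebra of D-flat sections onto the Moyal star-product algebra C^∞(ℝ^{2n},ℂ)[[ℏ]]. -/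

import Mathlib

/-!  Common definitions: formal Weyl algebras, Moyal products, Weyl-bundle valued
differential forms on ℝ^{2n}, Fedosov connections, star-products on smooth functions,
multidifferential operators and Hochschild coboundaries.  -/

noncomputable section
namespace StarPaper

open scoped BigOperators

/-! ### Formal power series in y -/

/-- The fiber coefficient ring `ℂ[[y^1, …, y^N]]`. -/
abbrev Wc (N : ℕ) := MvPowerSeries (Fin N) ℂ

/-- Build a formal power series from its coefficient function. -/
def Wc.mk {N : ℕ} (f : (Fin N →₀ ℕ) → ℂ) : Wc N := f

/-- Formal partial derivative `∂/∂y^i` on `ℂ[[y]]`. -/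
def yD {N : ℕ} (i : Fin N) (a : Wc N) : Wc N :=
  Wc.mk fun β => ((β i : ℂ) + 1) * MvPowerSeries.coeff (β + Finsupp.single i 1) a

/-- Formal iterated partial derivative `∂^α` on `ℂ[[y]]`. -/
def yDM {N : ℕ} (α : Fin N →₀ ℕ) (a : Wc N) : Wc N :=
  Wc.mk fun β =>
    (∏ i : Fin N, (((β i + α i).factorial : ℂ) / ((β i).factorial : ℂ))) *
      MvPowerSeries.coeff (β + α) a

/-- Iterated derivatives along a tuple of directions. -/
def iterD {R : Type*} {N : ℕ} (D : Fin N → R → R) : {k : ℕ} → (Fin k → Fin N) → R → R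
  | 0, _, a => a
  | _ + 1, v, a => D (v 0) (iterD D (fun t => v t.succ) a)

/-- The `k`-th term of the Moyal–Weyl product for a constant matrix `π`:
`((-iℏ/2)^k/k!) Σ π^{i₁j₁}⋯π^{i_kj_k} (∂^k a/∂y^{i₁}⋯) (∂^k b/∂y^{j₁}⋯)`. -/
def moyalTerm {R : Type*} [CommRing R] [Module ℂ R] {N : ℕ}
    (D : Fin N → R → R) (π : Matrix (Fin N) (Fin N) ℂ) (k : ℕ) (a b : R) : R :=
  ((-Complex.I / 2) ^ k / (Nat.factorial k : ℂ)) •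
    ∑ i : Fin k → Fin N, ∑ j : Fin k → Fin N,
      (∏ t, π (i t) (j t)) • (iterD D i a * iterD D j b)

/-- Moyal product on formal power series `Σ_m ℏ^m F_m` (coefficients `F : ℕ → R`). -/
def moyalN {R : Type*} [CommRing R] [Module ℂ R] {N : ℕ} (D : Fin N → R → R)
    (π : Matrix (Fin N) (Fin N) ℂ) (F G : ℕ → R) : ℕ → R :=
  fun m => ∑ k ∈ Finset.range (m + 1), ∑ l ∈ Finset.range (m - k + 1),
    moyalTerm D π k (F l) (G (m - k - l))

/-- Moyal product on formal Laurent series `Σ_m ℏ^m F_m` (coefficients `F : ℤ → R`);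
the sum over contributions is finite for series bounded below in `ℏ`-degree. -/
def moyalZ {R : Type*} [CommRing R] [Module ℂ R] {N : ℕ} (D : Fin N → R → R)
    (π : Matrix (Fin N) (Fin N) ℂ) (F G : ℤ → R) : ℤ → R :=
  fun m => ∑ᶠ p : ℕ × ℤ, moyalTerm D π p.1 (F p.2) (G (m - p.1 - p.2))

/-- Moyal term for an `ℏ`-dependent matrix `π(ℏ) = π₀ + ℏπ₁`: the part of the `k`-th
Moyal term in which the product of matrix entries contributes `ℏ^d`. -/
def moyalTermH {R : Type*} [CommRing R] [Module ℂ R] {N : ℕ} (D : Fin N → R → R)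
    (π0 π1 : Matrix (Fin N) (Fin N) ℂ) (k d : ℕ) (a b : R) : R :=
  ((-Complex.I / 2) ^ k / (Nat.factorial k : ℂ)) •
    ∑ i : Fin k → Fin N, ∑ j : Fin k → Fin N,
      (∑ T ∈ Finset.univ.powerset.filter (fun T : Finset (Fin k) => T.card = d),
          (∏ t ∈ T, π1 (i t) (j t)) * ∏ t ∈ Tᶜ, π0 (i t) (j t)) •
        (iterD D i a * iterD D j b)

/-- Moyal product built from the `ℏ`-dependent matrix `π(ℏ) = π₀ + ℏπ₁`. -/
def moyalNH {R : Type*} [CommRing R] [Module ℂ R] {N : ℕ} (D : Fin N → R → R)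
    (π0 π1 : Matrix (Fin N) (Fin N) ℂ) (F G : ℕ → R) : ℕ → R :=
  fun m => ∑ k ∈ Finset.range (m + 1), ∑ d ∈ Finset.range (m - k + 1),
    ∑ l ∈ Finset.range (m - k - d + 1),
      moyalTermH D π0 π1 k d (F l) (G (m - k - d - l))

/-- The standard Poisson matrix `π` on `ℝ^{2n}` (inverse of the standard symplectic
matrix `ω`, normalized by `Σ_m ω_{jm} π^{mn} = δ_j^n`). -/
def stdPi (n : ℕ) : Matrix (Fin (2 * n)) (Fin (2 * n)) ℂ :=
  Matrix.of fun i j =>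
    if (i : ℕ) + n = (j : ℕ) then 1 else if (j : ℕ) + n = (i : ℕ) then -1 else 0

/-- The standard symplectic matrix `ω_{ij}`. -/
def stdOmega (n : ℕ) : Matrix (Fin (2 * n)) (Fin (2 * n)) ℂ := -stdPi n

/-! ### The formal Weyl algebra `W = ℂ[[y,ℏ]]` -/

/-- The formal Weyl algebra as `ℏ`-coefficient sequences. -/
abbrev Wa (N : ℕ) := ℕ → Wc N

/-- Moyal–Weyl product on `W` for a constant matrix `π`. -/
def wmulPi {N : ℕ} (π : Matrix (Fin N) (Fin N) ℂ) (a b : Wa N) : Wa N := moyalN yD π a b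

/-- Moyal–Weyl product on `W` for the standard symplectic Poisson matrix. -/
def wmul {n : ℕ} (a b : Wa (2 * n)) : Wa (2 * n) := wmulPi (stdPi n) a b

/-- The unit `1 ∈ W`. -/
def oneW (N : ℕ) : Wa N := fun m => if m = 0 then 1 else 0

/-- Scalar multiplication by a formal power series `s ∈ ℂ[[ℏ]]` (given by its
coefficients `s : ℕ → ℂ`). -/
def hsmul {N : ℕ} (s : ℕ → ℂ) (a : Wa N) : Wa N :=
  fun m => ∑ l ∈ Finset.range (m + 1), s l • a (m - l)

/-- The operator `E = -(i/2) Σ_j y^j ∂/∂y^j` on `ℂ[[y]]`. -/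
def EulW {N : ℕ} (a : Wc N) : Wc N :=
  Wc.mk fun β => -Complex.I / 2 * (∑ i : Fin N, (β i : ℂ)) * MvPowerSeries.coeff β a

/-- `E` on the Weyl algebra, acting on each `ℏ`-coefficient. -/
def EulWa {N : ℕ} (a : Wa N) : Wa N := fun m => EulW (a m)

/-- Termwise derivative `∂/∂ℏ`. -/
def hD {N : ℕ} (a : Wa N) : Wa N := fun m => (((m + 1 : ℕ) : ℂ)) • a (m + 1)

/-- Multiplication by `ℏ`. -/
def hM {N : ℕ} (a : Wa N) : Wa N := fun m => match m with
  | 0 => 0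
  | Nat.succ m' => a m'

/-- Division by `ℏ` (exact on elements divisible by `ℏ`; discards the constant term). -/
def hInv {N : ℕ} (a : Wa N) : Wa N := fun m => a (m + 1)

/-- The `ℏ`-derivative of the Moyal–Weyl product structure:
`c₁(a,b) = ∂(a⋆b)/∂ℏ − (∂a/∂ℏ)⋆b − a⋆(∂b/∂ℏ)`. -/
def c1W {n : ℕ} (a b : Wa (2 * n)) : Wa (2 * n) :=
  hD (wmul a b) - wmul (hD a) b - wmul a (hD b)

/-! ### W-valued differential forms on ℝ^{2n} -/

/-- Points of `ℝ^{2n}`. -/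
abbrev Pt (n : ℕ) := Fin (2 * n) → ℝ

/-- `W`-valued exterior forms on `ℝ^{2n}`: the component at a finite index set
`S = {j₁ < ⋯ < j_q}` is the coefficient of `dx^{j₁} ∧ ⋯ ∧ dx^{j_q}`. -/
abbrev WF (n : ℕ) := Finset (Fin (2 * n)) → Pt n → Wa (2 * n)

/-- Sign `(-1)^{#{j ∈ S, j < i}}` for inserting `dx^i` in front of `dx^S`. -/
def insSign {N : ℕ} (S : Finset (Fin N)) (i : Fin N) : ℂ :=
  (-1) ^ (S.filter fun j => j < i).card

/-- Koszul sign for merging `dx^{S₁} ∧ dx^{S₂}` into increasing order. -/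
def shuffleSign {N : ℕ} (S1 S2 : Finset (Fin N)) : ℂ :=
  (-1) ^ ((S1 ×ˢ S2).filter fun p => p.2 < p.1).card

/-- `∂/∂y^i` on the Weyl algebra. -/
def yDa {N : ℕ} (i : Fin N) (w : Wa N) : Wa N := fun m => yD i (w m)

/-- The operator `δ a = Σ_i dx^i ∧ ∂a/∂y^i`. -/
def deltaW {n : ℕ} (a : WF n) : WF n :=
  fun S x => ∑ i ∈ S, insSign S i • yDa i (a (S.erase i) x)

/-- The partial derivative `∂/∂x^i` of a `W`-valued function, taken coefficientwise. -/
def xD {n : ℕ} (i : Fin (2 * n)) (f : Pt n → Wa (2 * n)) (x : Pt n) : Wa (2 * n) :=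
  fun m => Wc.mk fun β =>
    fderiv ℝ (fun x' => MvPowerSeries.coeff β (f x' m)) x (Pi.single i 1)

/-- The exterior derivative `d a = Σ_i dx^i ∧ ∂a/∂x^i` on `W`-valued forms. -/
def extD {n : ℕ} (a : WF n) : WF n :=
  fun S x => ∑ i ∈ S, insSign S i • xD i (a (S.erase i)) x

/-- The product on `W`-valued forms: Moyal–Weyl product combined with wedge product. -/
def wMulF {n : ℕ} (a b : WF n) : WF n :=
  fun S x => ∑ S1 ∈ S.powerset, shuffleSign S1 (S \ S1) • wmul (a S1 x) (b (S \ S1) x)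

/-- Graded commutator `[r, a] = r⋆a − (−1)^{|a|} a⋆r` with a form `r` of degree 1. -/
def comm1 {n : ℕ} (r a : WF n) : WF n :=
  fun S x => wMulF r a S x - (-1 : ℂ) ^ (S.card - 1) • wMulF a r S x

/-- Graded commutator `[u, a] = u⋆a − a⋆u` with a form `u` of even degree. -/
def commE {n : ℕ} (u a : WF n) : WF n := fun S x => wMulF u a S x - wMulF a u S x

/-- The connection `D = −δ + d + (i/ℏ)[r, ·]` determined by a `W`-valued 1-form `r`. -/
def fedD {n : ℕ} (r a : WF n) : WF n :=
  fun S x => -deltaW a S x + extD a S x + Complex.I • hInv (comm1 r a S x)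

/-- A `W`-valued form has smooth coefficients. -/
def WF.Smooth {n : ℕ} (a : WF n) : Prop :=
  ∀ S m β, ContDiff ℝ (⊤ : ℕ∞) fun x => MvPowerSeries.coeff β (a S x m)

/-- A `W`-valued form is homogeneous of form-degree `q`. -/
def isForm {n : ℕ} (q : ℕ) (a : WF n) : Prop := ∀ S, S.card ≠ q → a S = 0

/-- A `W`-valued form is scalar: all coefficients are independent of the `y` variables. -/
def isScalar {n : ℕ} (a : WF n) : Prop :=
  ∀ S x m β, β ≠ 0 → MvPowerSeries.coeff β (a S x m) = 0

/-- The constant standard symplectic 2-form `ω = (1/2) Σ ω_{ij} dx^i ∧ dx^j`. -/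
def omegaF (n : ℕ) : WF n :=
  fun S _ m =>
    if m = 0 then
      (MvPowerSeries.C : ℂ →+* MvPowerSeries (Fin (2 * n)) ℂ)
        (∑ i : Fin (2 * n), ∑ j : Fin (2 * n),
          if i < j ∧ S = {i, j} then stdOmega n i j else 0)
    else 0

/-- The curvature `Ω = ω + δr − dr − (i/ℏ) r⋆r` of the connection `−δ + d + (i/ℏ)[r,·]`. -/
def curv {n : ℕ} (r : WF n) : WF n :=
  fun S x => omegaF n S x + deltaW r S x - extD r S x - Complex.I • hInv (wMulF r r S x)

/-- The operator `δ⁻¹`, acting as `(1/(p+q)) Σ_k y^k ι_k` on the part of `y`-degree `p`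
and form-degree `q` (and as `0` for `p = q = 0`). -/
def deltaInv {n : ℕ} (a : WF n) : WF n :=
  fun S x m => Wc.mk fun β =>
    ((((β.sum fun _ e => e) + S.card : ℕ) : ℂ))⁻¹ *
      ∑ k : Fin (2 * n),
        if k ∉ S ∧ 1 ≤ β k then
          insSign S k * MvPowerSeries.coeff (β - Finsupp.single k 1) (a (insert k S) x m)
        else 0

/-! ### x-independent W-valued exterior forms (the graded algebra W⊗Λ) -/

/-- `W`-valued exterior forms with constant coefficients. -/
abbrev WL (n : ℕ) := Finset (Fin (2 * n)) → Wa (2 * n)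

/-- `δ` on `W ⊗ Λ`. -/
def deltaWL {n : ℕ} (a : WL n) : WL n :=
  fun S => ∑ i ∈ S, insSign S i • yDa i (a (S.erase i))

/-- Product (Moyal combined with wedge) on `W ⊗ Λ`. -/
def wMulL {n : ℕ} (a b : WL n) : WL n :=
  fun S => ∑ S1 ∈ S.powerset, shuffleSign S1 (S \ S1) • wmul (a S1) (b (S \ S1))

/-- `E` on `W ⊗ Λ`, acting on the `W`-coefficients. -/
def EulL {n : ℕ} (a : WL n) : WL n := fun S => EulWa (a S)

/-- The `W`-valued 1-form `Σ_{i,j} ω_{ij} y^i dx^j`. -/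
def oydxW (n : ℕ) : WL n :=
  fun S m =>
    if m = 0 then
      ∑ j : Fin (2 * n),
        (if S = {j} then ∑ i : Fin (2 * n), stdOmega n i j • MvPowerSeries.X i else 0)
    else 0

/-- The 1-form `K₀ = −(Er − iℏ ∂r/∂ℏ + i r + (i/2) Σ ω_{ij} y^i dx^j)`. -/
def K0 {n : ℕ} (r : WF n) : WF n :=
  fun S x =>
    -(EulWa (r S x) - Complex.I • hM (hD (r S x)) + Complex.I • r S x
      + (Complex.I / 2) • oydxW n S)

/-- The quantum Liouville-type operator `ρ(u) = (ℏ/i) ∂u/∂ℏ + E u`. -/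
def rhoW {n : ℕ} (u : WF n) : WF n :=
  fun S x m => (-Complex.I * (m : ℂ)) • u S x m + EulW (u S x m)

/-- `c₁` extended to `W`-valued forms. -/
def c1F {n : ℕ} (a b : WF n) : WF n :=
  fun S x => ∑ S1 ∈ S.powerset, shuffleSign S1 (S \ S1) • c1W (a S1 x) (b (S \ S1) x)

/-! ### The Laurent (ℏ-inverted) Weyl algebra and forms -/

/-- The extended Weyl algebra `W⁺ = ℂ[[y]][ℏ⁻¹,ℏ]]` as `ℏ`-coefficient sequences. -/
abbrev WaZ (N : ℕ) := ℤ → Wc N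

/-- Moyal–Weyl product on `W⁺` for a constant matrix `π`. -/
def wmulZPi {N : ℕ} (π : Matrix (Fin N) (Fin N) ℂ) (a b : WaZ N) : WaZ N := moyalZ yD π a b

/-- Moyal–Weyl product on `W⁺` for the standard symplectic Poisson matrix. -/
def wmulZ {n : ℕ} (a b : WaZ (2 * n)) : WaZ (2 * n) := wmulZPi (stdPi n) a b

/-- `W⁺`-valued exterior forms on `ℝ^{2n}`. -/
abbrev WFZ (n : ℕ) := Finset (Fin (2 * n)) → Pt n → WaZ (2 * n)

/-- `∂/∂y^i` on `W⁺`. -/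
def yDaZ {N : ℕ} (i : Fin N) (w : WaZ N) : WaZ N := fun m => yD i (w m)

/-- `δ` on `W⁺`-valued forms. -/
def deltaZ {n : ℕ} (a : WFZ n) : WFZ n :=
  fun S x => ∑ i ∈ S, insSign S i • yDaZ i (a (S.erase i) x)

/-- `∂/∂x^i` on `W⁺`-valued functions. -/
def xDZ {n : ℕ} (i : Fin (2 * n)) (f : Pt n → WaZ (2 * n)) (x : Pt n) : WaZ (2 * n) :=
  fun m => Wc.mk fun β =>
    fderiv ℝ (fun x' => MvPowerSeries.coeff β (f x' m)) x (Pi.single i 1)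

/-- Exterior derivative on `W⁺`-valued forms. -/
def extDZ {n : ℕ} (a : WFZ n) : WFZ n :=
  fun S x => ∑ i ∈ S, insSign S i • xDZ i (a (S.erase i)) x

/-- Product on `W⁺`-valued forms. -/
def wMulZF {n : ℕ} (a b : WFZ n) : WFZ n :=
  fun S x => ∑ S1 ∈ S.powerset, shuffleSign S1 (S \ S1) • wmulZ (a S1 x) (b (S \ S1) x)

/-- Graded commutator with a 1-form, on `W⁺`-valued forms. -/
def comm1Z {n : ℕ} (r a : WFZ n) : WFZ n :=
  fun S x => wMulZF r a S x - (-1 : ℂ) ^ (S.card - 1) • wMulZF a r S x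

/-- Division by `ℏ` on `W⁺` (exact: a shift of Laurent coefficients). -/
def shiftZ {N : ℕ} (a : WaZ N) : WaZ N := fun m => a (m + 1)

/-- The connection `D = −δ + d + (i/ℏ)[r,·]` on `W⁺`-valued forms. -/
def fedDZ {n : ℕ} (r a : WFZ n) : WFZ n :=
  fun S x => -deltaZ a S x + extDZ a S x + Complex.I • shiftZ (comm1Z r a S x)

/-- Termwise `∂/∂ℏ` on `W⁺`. -/
def hDZ {N : ℕ} (a : WaZ N) : WaZ N := fun m => ((m + 1 : ℤ) : ℂ) • a (m + 1)

/-- `∂/∂ℏ` on `W⁺`-valued forms. -/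
def hDZF {n : ℕ} (a : WFZ n) : WFZ n := fun S x => hDZ (a S x)

/-- `E` on `W⁺`. -/
def EulZ {N : ℕ} (a : WaZ N) : WaZ N := fun m => EulW (a m)

/-- `E` on `W⁺`-valued forms. -/
def EulZF {n : ℕ} (a : WFZ n) : WFZ n := fun S x => EulZ (a S x)

/-- `c₁` on `W⁺`. -/
def c1Za {n : ℕ} (a b : WaZ (2 * n)) : WaZ (2 * n) :=
  hDZ (wmulZ a b) - wmulZ (hDZ a) b - wmulZ a (hDZ b)

/-- `c₁` on `W⁺`-valued forms. -/
def c1ZF {n : ℕ} (a b : WFZ n) : WFZ n :=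
  fun S x => ∑ S1 ∈ S.powerset, shuffleSign S1 (S \ S1) • c1Za (a S1 x) (b (S \ S1) x)

/-- Smoothness of the coefficients of a `W⁺`-valued form. -/
def WFZ.Smooth {n : ℕ} (a : WFZ n) : Prop :=
  ∀ S m β, ContDiff ℝ (⊤ : ℕ∞) fun x => MvPowerSeries.coeff β (a S x m)

/-- Homogeneity of form-degree `q` for `W⁺`-valued forms. -/
def isFormZ {n : ℕ} (q : ℕ) (a : WFZ n) : Prop := ∀ S, S.card ≠ q → a S = 0

/-- A `W⁺`-valued form has power series coefficients (no negative powers of `ℏ`). -/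
def PSupp {n : ℕ} (a : WFZ n) : Prop := ∀ S x m, m < 0 → a S x m = 0

/-- A Laurent series is bounded below in `ℏ`-degree. -/
def BddZ {α : Type*} [Zero α] (f : ℤ → α) : Prop :=
  ∃ N : ℕ, ∀ m : ℤ, m < -(N : ℤ) → f m = 0

/-! ### Smooth functions and star-products on ℝ^N -/

/-- Complex-valued functions on `ℝ^N`. -/
abbrev SmFn (N : ℕ) := (Fin N → ℝ) → ℂ

/-- Partial derivative `∂/∂x^i` of a (smooth) function. -/
def xDf {N : ℕ} (i : Fin N) (f : SmFn N) : SmFn N := fun x => fderiv ℝ f x (Pi.single i 1)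

/-- Iterated partial derivative `∂^α`. -/
def xDfM {N : ℕ} (α : Fin N →₀ ℕ) (f : SmFn N) : SmFn N :=
  (List.finRange N).foldr (fun i g => (xDf i)^[α i] g) f

/-- Formal power series with function coefficients: `C^∞(ℝ^N,ℂ)[[ℏ]]`. -/
abbrev SmSer (N : ℕ) := ℕ → SmFn N

/-- Formal Laurent series with function coefficients: `C^∞(ℝ^N,ℂ)[ℏ⁻¹,ℏ]]`. -/
abbrev SmLau (N : ℕ) := ℤ → SmFn N

/-- All coefficients of a series are smooth. -/
def SmSer.Smooth {N : ℕ} (F : SmSer N) : Prop := ∀ m, ContDiff ℝ (⊤ : ℕ∞) (F m)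

/-- All coefficients of a Laurent series are smooth. -/
def SmLau.Smooth {N : ℕ} (F : SmLau N) : Prop := ∀ m, ContDiff ℝ (⊤ : ℕ∞) (F m)

/-- The Moyal star-product on `C^∞(ℝ^N,ℂ)[[ℏ]]` for a constant matrix `π`. -/
def fMul {N : ℕ} (π : Matrix (Fin N) (Fin N) ℂ) (F G : SmSer N) : SmSer N :=
  moyalN xDf π F G

/-- The Moyal star-product on Laurent series. -/
def fMulZ {N : ℕ} (π : Matrix (Fin N) (Fin N) ℂ) (F G : SmLau N) : SmLau N :=
  moyalZ xDf π F G

/-- The Moyal star-product with `ℏ`-dependent matrix `π(ℏ) = π₀ + ℏπ₁`. -/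
def fMulH {N : ℕ} (π0 π1 : Matrix (Fin N) (Fin N) ℂ) (F G : SmSer N) : SmSer N :=
  moyalNH xDf π0 π1 F G

/-- The constant series `1`. -/
def oneSer (N : ℕ) : SmSer N := fun m => if m = 0 then (fun _ => 1) else 0

/-- The standard Poisson bracket `{f,g} = Σ π^{ij} ∂_i f ∂_j g` on `ℝ^{2n}`. -/
def pb (n : ℕ) (f g : SmFn (2 * n)) : SmFn (2 * n) :=
  fun x => ∑ i, ∑ j, stdPi n i j * xDf i f x * xDf j g x

/-! ### Multidifferential operators and star-products -/

/-- A `k`-multidifferential operator on `C^∞(ℝ^N,ℂ)`: a finite sum of terms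
`u(x) (∂^{α₁}f₁)⋯(∂^{α_k}f_k)`, recorded by its finitely many coefficients. -/
abbrev MDOp (N k : ℕ) := (Fin k → (Fin N →₀ ℕ)) →₀ SmFn N

/-- Action of a multidifferential operator. -/
def MDOp.app {N k : ℕ} (c : MDOp N k) (f : Fin k → SmFn N) : SmFn N :=
  fun x => c.sum fun T u => u x * ∏ t, xDfM (T t) (f t) x

/-- A multidifferential operator has smooth coefficients. -/
def MDOp.Smooth {N k : ℕ} (c : MDOp N k) : Prop := ∀ T, ContDiff ℝ (⊤ : ℕ∞) (c T)

/-- A family of bidifferential operators `C_k`, extended `ℂ[[ℏ]]`-bilinearly: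
`F ⋆ G = Σ ℏ^{k+l+l'} C_k(F_l, G_{l'})`. -/
def starN {N : ℕ} (C : ℕ → MDOp N 2) (F G : SmSer N) : SmSer N :=
  fun m => ∑ k ∈ Finset.range (m + 1), ∑ l ∈ Finset.range (m - k + 1),
    MDOp.app (C k) ![F l, G (m - k - l)]

/-- The `ℂ[ℏ⁻¹,ℏ]]`-bilinear extension of a star-product to Laurent series. -/
def starZ {N : ℕ} (C : ℕ → MDOp N 2) (F G : SmLau N) : SmLau N :=
  fun m => ∑ᶠ p : ℕ × ℤ, MDOp.app (C p.1) ![F p.2, G (m - p.1 - p.2)]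

/-- Action of a Laurent cochain `c = Σ_l ℏ^l c_l` of multidifferential operators
on a `k`-tuple of Laurent series. -/
def lac {N k : ℕ} (cc : ℤ → MDOp N k) (u : Fin k → SmLau N) : SmLau N :=
  fun m => ∑ᶠ v : Fin k → ℤ, MDOp.app (cc (m - ∑ t, v t)) fun t => u t (v t)

/-- A differential star-product on `ℝ^{2n}` quantizing the standard symplectic
structure: `f ⋆ g = Σ ℏ^k C_k(f,g)` with `C_k` bidifferential, `C₀(f,g) = fg`,
`1` a unit, `⋆` associative, and `C₁(f,g) − C₁(g,f) = −i{f,g}`. -/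
structure DiffStar (n : ℕ) where
  C : ℕ → MDOp (2 * n) 2
  smooth : ∀ k, MDOp.Smooth (C k)
  C0 : ∀ f g : SmFn (2 * n), MDOp.app (C 0) ![f, g] = f * g
  unit_left : ∀ F : SmSer (2 * n), SmSer.Smooth F → starN C (oneSer (2 * n)) F = F
  unit_right : ∀ F : SmSer (2 * n), SmSer.Smooth F → starN C F (oneSer (2 * n)) = F
  assoc : ∀ F G H : SmSer (2 * n), SmSer.Smooth F → SmSer.Smooth G → SmSer.Smooth H →
    starN C (starN C F G) H = starN C F (starN C G H)
  C1skew : ∀ f g : SmFn (2 * n), ContDiff ℝ (⊤ : ℕ∞) f → ContDiff ℝ (⊤ : ℕ∞) g →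
    MDOp.app (C 1) ![f, g] - MDOp.app (C 1) ![g, f] = fun x => -Complex.I * pb n f g x

/-! ### Hochschild coboundary -/

/-- The Hochschild coboundary `b̃` of a `k`-cochain with respect to a product `mul`. -/
def hoch {A : Type*} [AddCommGroup A] (mul : A → A → A) {k : ℕ}
    (c : (Fin k → A) → A) : (Fin (k + 1) → A) → A :=
  fun u =>
    mul (u 0) (c fun t => u t.succ)
      + ∑ i : Fin k, ((-1 : ℤ) ^ ((i : ℕ) + 1)) •
          c (fun j => if (j : ℕ) < (i : ℕ) then u j.castSucc
            else if (j : ℕ) = (i : ℕ) then mul (u j.castSucc) (u j.succ)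
            else u j.succ)
      + ((-1 : ℤ) ^ (k + 1)) • mul (c fun t => u t.castSucc) (u (Fin.last k))

/-! ### Formal differential operators on ℂ[[y]] -/

/-- A formal `k`-differential operator on `ℂ[[y^1,…,y^N]]`:
`c(a₁,…,a_k) = Σ_T u^T (∂^{T 1}a₁)⋯(∂^{T k}a_k)` with coefficients
`u^T ∈ ℂ[[y]]` such that for each degree `d` only finitely many tuples `T` have a
coefficient containing a nonzero monomial of degree `≤ d`. -/
structure FDOp (N k : ℕ) where
  u : (Fin k → (Fin N →₀ ℕ)) → Wc N
  fin : ∀ d : ℕ,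
    {T : Fin k → (Fin N →₀ ℕ) | ∃ β : Fin N →₀ ℕ,
      (β.sum fun _ e => e) ≤ d ∧ MvPowerSeries.coeff β (u T) ≠ 0}.Finite

/-- Action of a formal differential operator (the defining sum converges in the
`y`-adic topology; each coefficient receives only finitely many contributions). -/
def FDOp.app {N k : ℕ} (P : FDOp N k) (a : Fin k → Wc N) : Wc N :=
  Wc.mk fun β => ∑ᶠ T : Fin k → (Fin N →₀ ℕ),
    MvPowerSeries.coeff β (P.u T * ∏ t, yDM (T t) (a t))

/-- Action of a Laurent cochain `c = Σ_l ℏ^l c_l` of formal differential operators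
on a `k`-tuple of elements of `W⁺`. -/
def flac {N k : ℕ} (cc : ℤ → FDOp N k) (a : Fin k → WaZ N) : WaZ N :=
  fun m => ∑ᶠ v : Fin k → ℤ, FDOp.app (cc (m - ∑ t, v t)) fun t => a t (v t)

/-! ### Flat sections, Taylor series and quantum exponential -/

/-- Fiberwise Taylor series of a smooth function at `x`. -/
def taylorW {N : ℕ} (f : SmFn N) (x : Fin N → ℝ) : Wc N :=
  Wc.mk fun β => (∏ i : Fin N, ((β i).factorial : ℂ))⁻¹ * xDfM β f x

/-- Sections of the Weyl bundle over `ℝ^{2n}` (W-valued 0-forms). -/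
abbrev Sect (n : ℕ) := Pt n → Wa (2 * n)

/-- The fiberwise Taylor lift of a series of smooth functions. -/
def taylorS {n : ℕ} (F : SmSer (2 * n)) : Sect n := fun x m => taylorW (F m) x

/-- A section has smooth coefficients. -/
def Sect.Smooth {n : ℕ} (u : Sect n) : Prop :=
  ∀ m β, ContDiff ℝ (⊤ : ℕ∞) fun x => MvPowerSeries.coeff β (u x m)

/-- A section is flat for `D = −δ + d`: its component equations read
`∂u/∂x^i = ∂u/∂y^i` for all `i`. -/
def Sect.Flat {n : ℕ} (u : Sect n) : Prop :=
  ∀ (i : Fin (2 * n)) (x : Pt n), xD i u x = yDa i (u x)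

/-- The symbol map `σ(u) = u|_{y=0}`. -/
def sigma {n : ℕ} (u : Sect n) : SmSer (2 * n) :=
  fun m x => MvPowerSeries.coeff 0 (u x m)

/-- Fiberwise Moyal–Weyl product of sections. -/
def wmulS {n : ℕ} (u v : Sect n) : Sect n := fun x => wmul (u x) (v x)

/-! ### Vector fields and Liouville-type operators -/

/-- Action of a vector field `X = Σ_j X^j ∂_j` on a function. -/
def XAct {N : ℕ} (X : Fin N → SmFn N) (f : SmFn N) : SmFn N :=
  fun x => ∑ j, X j x * xDf j f x

/-- A smooth function viewed as a series concentrated in `ℏ`-degree `0`. -/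
def embS {N : ℕ} (f : SmFn N) : SmSer N := fun m => if m = 0 then f else 0

/-- The Hochschild coboundary `b̃X(f,g) = f⋆(Xg) − X(f⋆g) + (Xf)⋆g` of a vector
field, for the Moyal star-product with constant matrix `π`. -/
def bXMoyal {N : ℕ} (π : Matrix (Fin N) (Fin N) ℂ) (X : Fin N → SmFn N)
    (f g : SmFn N) : SmSer N :=
  fMul π (embS f) (embS (XAct X g)) - (fun m => XAct X (fMul π (embS f) (embS g) m))
    + fMul π (embS (XAct X f)) (embS g)

/-- The operator `ℏ ∂_ℏ + X` on `C^∞(ℝ^N,ℂ)[[ℏ]]`. -/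
def LOp {N : ℕ} (X : Fin N → SmFn N) (F : SmSer N) : SmSer N :=
  fun m x => (m : ℂ) * F m x + XAct X (F m) x

/-- The derivative of a star-product with respect to `ℏ`:
`c(f,g) = Σ_{k≥1} k ℏ^{k-1} C_k(f,g)`, extended `ℂ[[ℏ]]`-bilinearly. -/
def dStar {N : ℕ} (C : ℕ → MDOp N 2) (F G : SmSer N) : SmSer N :=
  fun m => ∑ k ∈ Finset.Icc 1 (m + 1), (k : ℂ) •
    ∑ l ∈ Finset.range (m + 1 - k + 1), MDOp.app (C k) ![F l, G (m + 1 - k - l)]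

end StarPaper

/-!
Flatness of a section `u` says that `∂u/∂x^i = ∂u/∂y^i` coefficientwise: the coefficient of
`y^(β + e_i)` is `(β_i + 1)⁻¹ ∂/∂x^i` of the coefficient of `y^β`. By induction on `β`, a flat
section is therefore determined by its symbol `σ(u) = u|_{y=0}`, and the fiberwise Taylor series of
`a` is the flat section with symbol `a`.

Both `∂/∂y^i` and the coefficientwise `∂/∂x^i` are derivations commuting with the `∂/∂y^j` from
which the Moyal–Weyl product is built, so each satisfies the Leibniz rule for that product; for
flat `u, v` the two derivatives of `u ⋆ v` therefore agree. Iterating flatness gives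
`(∂_y^t u)|_{y=0} = ∂_x^t σ(u)`, and since restriction to `y = 0` is multiplicative, it carries
`u ⋆ v` to the Moyal product `σ(u) ⋆ σ(v)`.
-/

namespace StarPaper

section

open MvPowerSeries
open scoped ContDiff

section DerivationRel

variable {R : Type*} [CommRing R] [Module ℂ R] {N : ℕ}

/-- A derivation commuting with the `D j`, given by its graph (`rel a a'` meaning that `a'` is the
derivative of `a`) so that it may be only partially defined, like the `x`-derivative at a point. -/
structure IsDerivationRel (D : Fin N → R → R) (rel : R → R → Prop) : Prop where
  zero : rel 0 0
  add {a a' b b' : R} : rel a a' → rel b b' → rel (a + b) (a' + b')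
  smul (c : ℂ) {a a' : R} : rel a a' → rel (c • a) (c • a')
  mul {a a' b b' : R} : rel a a' → rel b b' → rel (a * b) (a' * b + a * b')
  comp (j : Fin N) {a a' : R} : rel a a' → rel (D j a) (D j a')

namespace IsDerivationRel

variable {D : Fin N → R → R} {rel : R → R → Prop}

theorem sum (h : IsDerivationRel D rel) {ι : Type*} (s : Finset ι) {f f' : ι → R}
    (hf : ∀ i ∈ s, rel (f i) (f' i)) : rel (∑ i ∈ s, f i) (∑ i ∈ s, f' i) := by
  classical
  induction s using Finset.induction_on with
  | empty => simpa using h.zero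
  | insert i s hi ih =>
    rw [Finset.sum_insert hi, Finset.sum_insert hi]
    exact h.add (hf i (Finset.mem_insert_self i s))
      (ih fun j hj => hf j (Finset.mem_insert_of_mem hj))

theorem iterD (h : IsDerivationRel D rel) {a a' : R} (ha : rel a a') :
    ∀ {k : ℕ} (t : Fin k → Fin N), rel (StarPaper.iterD D t a) (StarPaper.iterD D t a')
  | 0, _ => ha
  | _ + 1, t => h.comp (t 0) (h.iterD ha _)

theorem moyalTerm (h : IsDerivationRel D rel) (π : Matrix (Fin N) (Fin N) ℂ) (k : ℕ)
    {a a' b b' : R} (ha : rel a a') (hb : rel b b') :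
    rel (StarPaper.moyalTerm D π k a b)
      (StarPaper.moyalTerm D π k a' b + StarPaper.moyalTerm D π k a b') := by
  simp only [StarPaper.moyalTerm, ← smul_add, ← Finset.sum_add_distrib]
  refine h.smul _ (h.sum _ fun i _ => h.sum _ fun j _ => h.smul _ ?_)
  exact h.mul (h.iterD ha i) (h.iterD hb j)

theorem moyalN (h : IsDerivationRel D rel) (π : Matrix (Fin N) (Fin N) ℂ) {F F' G G' : ℕ → R}
    (hF : ∀ l, rel (F l) (F' l)) (hG : ∀ l, rel (G l) (G' l)) (m : ℕ) :
    rel (StarPaper.moyalN D π F G m)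
      (StarPaper.moyalN D π F' G m + StarPaper.moyalN D π F G' m) := by
  simp only [StarPaper.moyalN, ← Finset.sum_add_distrib]
  exact h.sum _ fun k _ => h.sum _ fun l _ => h.moyalTerm π k (hF l) (hG _)

end IsDerivationRel

end DerivationRel

theorem map_moyalN {R S T : Type*} [CommRing R] [CommRing S] [CommRing T] [Algebra ℂ R]
    [Algebra ℂ S] [Algebra ℂ T] {N : ℕ} (φ : R →ₐ[ℂ] T) (ψ : S →ₐ[ℂ] T) (D : Fin N → R → R)
    (D' : Fin N → S → S) (π : Matrix (Fin N) (Fin N) ℂ) {F G : ℕ → R} {F' G' : ℕ → S}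
    (hF : ∀ l {k : ℕ} (t : Fin k → Fin N), φ (iterD D t (F l)) = ψ (iterD D' t (F' l)))
    (hG : ∀ l {k : ℕ} (t : Fin k → Fin N), φ (iterD D t (G l)) = ψ (iterD D' t (G' l)))
    (m : ℕ) : φ (moyalN D π F G m) = ψ (moyalN D' π F' G' m) := by
  simp only [moyalN, moyalTerm, map_sum, map_smul, map_mul, hF, hG]

theorem iterD_pi_apply {E R : Type*} {N : ℕ} (D : Fin N → R → R) {k : ℕ} (t : Fin k → Fin N)
    (a : E → R) (y : E) : iterD (fun j (a : E → R) z => D j (a z)) t a y = iterD D t (a y) := by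
  induction k with
  | zero => rfl
  | succ k ih => exact congrArg (D (t 0)) (ih _)

theorem moyalN_pi_apply {E R : Type*} [CommRing R] [Algebra ℂ R] {N : ℕ} (D : Fin N → R → R)
    (π : Matrix (Fin N) (Fin N) ℂ) (F G : ℕ → E → R) (m : ℕ) (y : E) :
    moyalN (fun j (a : E → R) z => D j (a z)) π F G m y
      = moyalN D π (fun l => F l y) (fun l => G l y) m :=
  map_moyalN (Pi.evalAlgHom ℂ (fun _ => R) y) (AlgHom.id ℂ R) _ _ π
    (fun _ _ _ => iterD_pi_apply D _ _ y) (fun _ _ _ => iterD_pi_apply D _ _ y) m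

section FormalDerivative

variable {N : ℕ}

theorem yD_eq_pderiv (i : Fin N) (a : Wc N) : yD i a = pderiv ℂ i a := by
  ext β
  rw [coeff_pderiv, mul_comm]
  rfl

theorem coeff_yD (i : Fin N) (a : Wc N) (β : Fin N →₀ ℕ) :
    coeff β (yD i a) = ((β i : ℂ) + 1) * coeff (β + Finsupp.single i 1) a := rfl

theorem yD_comm (i j : Fin N) (a : Wc N) : yD i (yD j a) = yD j (yD i a) := by
  ext β
  simp only [coeff_yD, add_right_comm β]
  rcases eq_or_ne i j with rfl | hij
  · rfl
  · simp [hij, hij.symm]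
    ring

theorem isDerivationRel_yD (i : Fin N) :
    IsDerivationRel yD (fun a a' : Wc N => yD i a = a') where
  zero := by simp only [yD_eq_pderiv, map_zero]
  add ha hb := by simp only [← ha, ← hb, yD_eq_pderiv, map_add]
  smul c a _ ha := by
    rw [← ha, yD_eq_pderiv, yD_eq_pderiv]
    exact (pderiv ℂ i).map_smul c a
  mul ha hb := by
    simp only [← ha, ← hb, yD_eq_pderiv, Derivation.leibniz, smul_eq_mul]
    ring
  comp j _ _ ha := by rw [yD_comm, ha]

theorem yDa_wmulPi (π : Matrix (Fin N) (Fin N) ℂ) (i : Fin N) (a b : Wa N) :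
    yDa i (wmulPi π a b) = wmulPi π (yDa i a) b + wmulPi π a (yDa i b) :=
  funext fun m => (isDerivationRel_yD i).moyalN π (fun _ => rfl) (fun _ => rfl) m

end FormalDerivative

section CoeffDeriv

variable {E : Type*} [NormedAddCommGroup E] [NormedSpace ℝ E] {N : ℕ}

def HasCoeffDerivAt (a a' : E → Wc N) (x v : E) : Prop :=
  ∀ β, DifferentiableAt ℝ (fun y => coeff β (a y)) x ∧
    fderiv ℝ (fun y => coeff β (a y)) x v = coeff β (a' x)

theorem isDerivationRel_hasCoeffDerivAt (x v : E) :
    IsDerivationRel (fun j (a : E → Wc N) y => yD j (a y))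
      (fun a a' => HasCoeffDerivAt a a' x v) where
  zero β := by simp
  add ha hb β := by
    refine ⟨(ha β).1.add (hb β).1, ?_⟩
    simp only [Pi.add_apply, map_add]
    rw [fderiv_fun_add (ha β).1 (hb β).1, add_apply, (ha β).2, (hb β).2]
  smul c _ _ ha β := by
    simp only [Pi.smul_apply, map_smul, smul_eq_mul]
    refine ⟨(ha β).1.const_mul c, ?_⟩
    rw [fderiv_const_mul (ha β).1, smul_apply, (ha β).2, smul_eq_mul]
  mul {a a' b b'} ha hb β := by
    have hd (p : (Fin N →₀ ℕ) × (Fin N →₀ ℕ)) :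
        DifferentiableAt ℝ (fun y => coeff p.1 (a y) * coeff p.2 (b y)) x :=
      (ha p.1).1.mul (hb p.2).1
    simp only [Pi.mul_apply, Pi.add_apply, map_add, coeff_mul, ← Finset.sum_add_distrib]
    refine ⟨DifferentiableAt.fun_sum fun p _ => hd p, ?_⟩
    rw [fderiv_fun_sum fun p _ => hd p, sum_apply]
    refine Finset.sum_congr rfl fun p _ => ?_
    rw [fderiv_fun_mul (ha p.1).1 (hb p.2).1]
    simp only [add_apply, smul_apply, smul_eq_mul, (ha p.1).2, (hb p.2).2]
    ring
  comp j _ _ ha β := by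
    simp only [coeff_yD]
    refine ⟨((ha _).1.const_mul _), ?_⟩
    rw [fderiv_const_mul (ha _).1, smul_apply, (ha _).2, smul_eq_mul]

end CoeffDeriv

section PartialDerivatives

variable {N : ℕ} {f : SmFn N}

theorem contDiff_xDf (hf : ContDiff ℝ ∞ f) (i : Fin N) : ContDiff ℝ ∞ (xDf i f) :=
  (contDiff_infty_iff_fderiv.1 hf).2.clm_apply contDiff_const

theorem xDf_const_mul (c : ℂ) (i : Fin N) :
    xDf i (fun x => c * f x) = fun x => c * xDf i f x := by
  funext x
  change fderiv ℝ (c • f) x _ = _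
  rw [fderiv_const_smul_field]
  rfl

theorem xDf_comm (hf : ContDiff ℝ ∞ f) (i j : Fin N) : xDf i (xDf j f) = xDf j (xDf i f) := by
  funext x
  have hf' : Differentiable ℝ (fderiv ℝ f) :=
    (contDiff_infty_iff_fderiv.1 hf).2.differentiable (by simp)
  have key (v w : Fin N → ℝ) :
      fderiv ℝ (fun y => fderiv ℝ f y w) x v = fderiv ℝ (fderiv ℝ f) x v w := by
    rw [fderiv_clm_apply (hf' x) (differentiableAt_const w)]
    simp
  change fderiv ℝ (fun y => fderiv ℝ f y _) x _ = fderiv ℝ (fun y => fderiv ℝ f y _) x _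
  rw [key, key]
  exact (hf.contDiffAt.isSymmSndFDerivAt (by simp [ENat.LEInfty.out])).eq _ _

theorem contDiff_xDf_iterate (hf : ContDiff ℝ ∞ f) (i : Fin N) (k : ℕ) :
    ContDiff ℝ ∞ ((xDf i)^[k] f) := by
  induction k with
  | zero => exact hf
  | succ k ih => rw [Function.iterate_succ_apply']; exact contDiff_xDf ih i

theorem xDf_iterate_comm (hf : ContDiff ℝ ∞ f) (i j : Fin N) (k : ℕ) :
    xDf i ((xDf j)^[k] f) = (xDf j)^[k] (xDf i f) := by
  induction k with
  | zero => rfl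
  | succ k ih =>
    rw [Function.iterate_succ_apply', xDf_comm (contDiff_xDf_iterate hf j k), ih,
      Function.iterate_succ_apply']

variable (α : Fin N → ℕ)

theorem contDiff_foldr_xDf_iterate (hf : ContDiff ℝ ∞ f) (L : List (Fin N)) :
    ContDiff ℝ ∞ (L.foldr (fun j g => (xDf j)^[α j] g) f) := by
  induction L with
  | nil => exact hf
  | cons j L ih => exact contDiff_xDf_iterate ih j _

theorem xDf_foldr_xDf_iterate (hf : ContDiff ℝ ∞ f) (i : Fin N) (L : List (Fin N)) :
    xDf i (L.foldr (fun j g => (xDf j)^[α j] g) f)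
      = L.foldr (fun j g => (xDf j)^[α j] g) (xDf i f) := by
  induction L with
  | nil => rfl
  | cons j L ih =>
    simp only [List.foldr_cons]
    rw [xDf_iterate_comm (contDiff_foldr_xDf_iterate α hf L), ih]

theorem foldr_xDf_iterate_update (hf : ContDiff ℝ ∞ f) (i : Fin N) {L : List (Fin N)}
    (hi : i ∈ L) (hL : L.Nodup) :
    L.foldr (fun j g => (xDf j)^[Function.update α i (α i + 1) j] g) f
      = xDf i (L.foldr (fun j g => (xDf j)^[α j] g) f) := by
  induction L with
  | nil => simp at hi
  | cons j L ih =>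
    obtain ⟨hjL, hL⟩ := List.nodup_cons.1 hL
    simp only [List.foldr_cons]
    rcases eq_or_ne j i with rfl | hji
    · rw [List.foldr_ext _ _ _ fun k hk _ => by rw [Function.update_of_ne (by grind)],
        Function.update_self, Function.iterate_succ_apply',
        xDf_iterate_comm (contDiff_foldr_xDf_iterate α hf L)]
    · rw [Function.update_of_ne hji, ih (by grind) hL,
        xDf_iterate_comm (contDiff_foldr_xDf_iterate α hf L)]

theorem xDfM_zero (f : SmFn N) : xDfM 0 f = f := by
  simp only [xDfM]
  induction List.finRange N <;> simp_all

theorem contDiff_xDfM (hf : ContDiff ℝ ∞ f) (α : Fin N →₀ ℕ) : ContDiff ℝ ∞ (xDfM α f) :=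
  contDiff_foldr_xDf_iterate α hf _

theorem xDf_xDfM (hf : ContDiff ℝ ∞ f) (i : Fin N) (α : Fin N →₀ ℕ) :
    xDf i (xDfM α f) = xDfM (α + Finsupp.single i 1) f := by
  have hα : ⇑(α + Finsupp.single i 1 : Fin N →₀ ℕ) = Function.update α i (α i + 1) := by
    ext j
    rcases eq_or_ne j i with rfl | hji <;> simp [*]
  rw [xDfM, xDfM, hα,
    foldr_xDf_iterate_update α hf i (List.mem_finRange i) (List.nodup_finRange N)]

theorem prod_factorial_add_single (β : Fin N →₀ ℕ) (i : Fin N) :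
    ∏ j, ((β + Finsupp.single i 1 : Fin N →₀ ℕ) j).factorial
      = (β i + 1) * ∏ j, (β j).factorial := by
  rw [Fintype.prod_eq_mul_prod_compl i, Fintype.prod_eq_mul_prod_compl i (β · |>.factorial),
    Finset.prod_congr rfl fun j hj => by
      rw [Finsupp.add_apply, Finsupp.single_eq_of_ne (by simpa using hj), add_zero]]
  simp [Nat.factorial_succ, mul_assoc]

end PartialDerivatives

section FlatSections

variable {n : ℕ}

theorem coeff_xD (i : Fin (2 * n)) (u : Sect n) (x : Pt n) (m : ℕ) (β : Fin (2 * n) →₀ ℕ) :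
    coeff β (xD i u x m) = xDf i (fun y => coeff β (u y m)) x := rfl

theorem xD_yDa (i j : Fin (2 * n)) (u : Sect n) (x : Pt n) :
    xD j (fun y => yDa i (u y)) x = yDa i (xD j u x) := by
  funext m
  ext β
  simp only [coeff_xD, yDa, coeff_yD, xDf_const_mul]

theorem Sect.Flat.yDa {u : Sect n} (hu : u.Flat) (i : Fin (2 * n)) :
    Sect.Flat fun x => yDa i (u x) := by
  intro j x
  rw [xD_yDa, hu]
  exact funext fun m => yD_comm i j _

theorem sigma_yDa {u : Sect n} (hu : u.Flat) (i : Fin (2 * n)) :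
    sigma (fun x => yDa i (u x)) = fun m => xDf i (sigma u m) := by
  funext m x
  change coeff 0 (yDa i (u x) m) = coeff 0 (xD i u x m)
  rw [hu]

theorem Sect.Flat.iterD {u : Sect n} (hu : u.Flat) {k : ℕ} (t : Fin k → Fin (2 * n)) :
    Sect.Flat (fun x m => StarPaper.iterD yD t (u x m)) ∧
      sigma (fun x m => StarPaper.iterD yD t (u x m))
        = fun m => StarPaper.iterD xDf t (sigma u m) := by
  induction k with
  | zero => exact ⟨hu, rfl⟩
  | succ k ih =>
    obtain ⟨hflat, hsigma⟩ := ih fun s => t s.succ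
    refine ⟨hflat.yDa (t 0), ?_⟩
    change sigma (fun x => StarPaper.yDa (t 0) _) = _
    rw [sigma_yDa hflat, hsigma]
    rfl

theorem Sect.Flat.eq_of_sigma_eq {u v : Sect n} (hu : u.Flat) (hv : v.Flat)
    (h : sigma u = sigma v) : u = v := by
  suffices ∀ β m, (fun x => coeff β (u x m)) = fun x => coeff β (v x m) by
    funext x m
    ext β
    exact congrFun (this β m) x
  intro β
  induction β using WellFoundedLT.induction with
  | _ β ih =>
    intro m
    rcases eq_or_ne β 0 with rfl | hβ
    · exact congrFun h m
    obtain ⟨i, hi⟩ := Finsupp.ne_iff.1 hβ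
    have hle : Finsupp.single i 1 ≤ β := Finsupp.single_le_iff.2 (Nat.one_le_iff_ne_zero.2 hi)
    set γ := β - Finsupp.single i 1
    have hγ : γ + Finsupp.single i 1 = β := tsub_add_cancel_of_le hle
    have hlt : γ < β := lt_of_lt_of_eq (lt_add_of_pos_right γ (by simp [pos_iff_ne_zero])) hγ
    have hxD (w : Sect n) (hw : w.Flat) (x : Pt n) :
        coeff γ (xD i w x m) = ((γ i : ℂ) + 1) * coeff β (w x m) := by
      rw [hw, ← hγ]
      rfl
    funext x
    have key := congrArg (· x) (congrArg (xDf i) (ih γ hlt m))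
    simp only [← coeff_xD, hxD u hu, hxD v hv] at key
    exact mul_left_cancel₀ (Nat.cast_add_one_ne_zero _) key

end FlatSections

section TaylorLift

variable {n : ℕ} {F : SmSer (2 * n)}

theorem coeff_taylorS (F : SmSer (2 * n)) (x : Pt n) (m : ℕ) (β : Fin (2 * n) →₀ ℕ) :
    coeff β (taylorS F x m) = (∏ j, ((β j).factorial : ℂ))⁻¹ * xDfM β (F m) x := rfl

theorem taylorS_smooth (hF : SmSer.Smooth F) : Sect.Smooth (taylorS F) :=
  fun m β => contDiff_const.mul (contDiff_xDfM (hF m) β)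

theorem taylorS_flat (hF : SmSer.Smooth F) : Sect.Flat (taylorS F) := by
  intro i x
  funext m
  ext β
  have hfact : ∏ j, (((β + Finsupp.single i 1 : Fin (2 * n) →₀ ℕ) j).factorial : ℂ)
      = ((β i : ℂ) + 1) * ∏ j, ((β j).factorial : ℂ) := by
    exact_mod_cast prod_factorial_add_single β i
  rw [coeff_xD]
  simp only [coeff_taylorS, yDa, coeff_yD, xDf_const_mul, xDf_xDfM (hF m), hfact, mul_inv,
    ← mul_assoc, mul_inv_cancel₀ (Nat.cast_add_one_ne_zero (R := ℂ) (β i)), one_mul]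

theorem sigma_taylorS (F : SmSer (2 * n)) : sigma (taylorS F) = F := by
  funext m x
  simp [sigma, coeff_taylorS, xDfM_zero]

end TaylorLift

section Product

variable {n : ℕ}

theorem hasCoeffDerivAt_of_smooth {u : Sect n} (hu : u.Smooth) (i : Fin (2 * n)) (x : Pt n)
    (m : ℕ) : HasCoeffDerivAt (fun y => u y m) (fun y => xD i u y m) x (Pi.single i 1) :=
  fun β => ⟨((hu m β).differentiable (by simp)).differentiableAt, rfl⟩

theorem xD_wmulS {u v : Sect n} (hu : u.Smooth) (hv : v.Smooth) (i : Fin (2 * n)) (x : Pt n) :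
    xD i (wmulS u v) x = wmul (xD i u x) (v x) + wmul (u x) (xD i v x) := by
  funext m
  ext β
  have h := ((isDerivationRel_hasCoeffDerivAt x (Pi.single i 1)).moyalN (stdPi n)
    (hasCoeffDerivAt_of_smooth hu i x) (hasCoeffDerivAt_of_smooth hv i x) m β).2
  simp only [moyalN_pi_apply, Pi.add_apply] at h
  exact h

theorem Sect.Flat.wmulS {u v : Sect n} (hu : u.Smooth) (hv : v.Smooth) (hfu : u.Flat)
    (hfv : v.Flat) : Sect.Flat (wmulS u v) := by
  intro i x
  rw [xD_wmulS hu hv, hfu, hfv]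
  exact (yDa_wmulPi (stdPi n) i (u x) (v x)).symm

theorem sigma_wmulS {u v : Sect n} (hu : u.Flat) (hv : v.Flat) :
    sigma (wmulS u v) = fMul (stdPi n) (sigma u) (sigma v) := by
  funext m x
  let c : Wc (2 * n) →ₐ[ℂ] ℂ :=
    { constantCoeff with commutes' := fun c => by simp [← c_eq_algebraMap] }
  exact map_moyalN c (Pi.evalAlgHom ℂ (fun _ : Pt n => ℂ) x) yD xDf (stdPi n)
    (F := u x) (G := v x) (F' := sigma u) (G' := sigma v)
    (fun l _ t => congrFun (congrFun (hu.iterD t).2 l) x)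
    (fun l _ t => congrFun (congrFun (hv.iterD t).2 l) x) m

end Product

end

/-- For `D = −δ + d` on `W`-valued forms over `ℝ^{2n}`:
(i) every `a ∈ C^∞(ℝ^{2n},ℂ)[[ℏ]]` has a unique flat lift `ã` with `ã(x,0) = a(x)`,
namely the fiberwise Taylor series; (ii) the fiberwise Moyal–Weyl product of two flat
sections is flat and projects to the Moyal star-product of the projections.  Hence
`σ(u) = u|_{y=0}` identifies the algebra of flat sections with the Moyal star-product
algebra `C^∞(ℝ^{2n},ℂ)[[ℏ]]`. -/
theorem flat_sections_moyal (n : ℕ) :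
    (∀ F : SmSer (2 * n), SmSer.Smooth F →
      Sect.Smooth (taylorS F) ∧ Sect.Flat (taylorS F) ∧ sigma (taylorS F) = F ∧
      ∀ u : Sect n, Sect.Smooth u → Sect.Flat u → sigma u = F → u = taylorS F) ∧
    (∀ u v : Sect n, Sect.Smooth u → Sect.Smooth v → Sect.Flat u → Sect.Flat v →
      Sect.Flat (wmulS u v) ∧
      sigma (wmulS u v) = fMul (stdPi n) (sigma u) (sigma v)) := by
  refine ⟨fun F hF => ⟨taylorS_smooth hF, taylorS_flat hF, sigma_taylorS F, ?_⟩,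
    fun u v hu hv hfu hfv => ⟨Sect.Flat.wmulS hu hv hfu hfv, sigma_wmulS hfu hfv⟩⟩
  intro u _ hfu hσ
  exact hfu.eq_of_sigma_eq (taylorS_flat hF) (hσ.trans (sigma_taylorS F).symm)

end StarPaper
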